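/- arXiv:0709.0987 — 4 statements merged into one kernel-verified Lean document; each statement's English description precedes it below -/
import Mathlib

section
/- The limit relation lim_{c→∞} c^{−n/2} H_n(x·√c; c) = U_n(x) holds, where U_n are the Chebyshev-like polynomials defined by U_0=1, U_1=x, U_{n+1}(x) = x·U_n(x) − U_{n−1}(x). -/
open Finset Polynomial

attribute [local instance] Classical.propDecidable

noncomputable def aH (c : ℝ) : ℕ → Polynomial ℝ
  | 0 => 1
  | 1 => Polynomial.X
  | n + 2 => Polynomial.X * aH c (n + 1) - Polynomial.C ((n : ℝ) + c) * aH c n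

noncomputable def chebU : ℕ → Polynomial ℝ
  | 0 => 1
  | 1 => Polynomial.X
  | n + 2 => Polynomial.X * chebU (n + 1) - chebU n

/-!
Put `s = √c` and `h_n(c) = H_n(x s; c) / s^n`. Dividing the recurrence of `H` by `s^(n+2) = c s^n`
gives `h_{n+2} = x h_{n+1} - (1 + n/c) h_n`, a three-term recurrence whose coefficients tend to
those of `U_n(x)` as `c → ∞`; limits pass through such a recurrence one index at a time.
-/

open Filter Topology

theorem tendsto_of_linear_recurrence {α R : Type*} [Ring R] [TopologicalSpace R]
    [IsTopologicalRing R] {l : Filter α} {u : α → ℕ → R} {v : ℕ → R} {a b : ℕ → α → R}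
    {A B : ℕ → R} (ha : ∀ n, Tendsto (a n) l (𝓝 (A n))) (hb : ∀ n, Tendsto (b n) l (𝓝 (B n)))
    (hu : ∀ n, ∀ᶠ c in l, u c (n + 2) = a n c * u c (n + 1) + b n c * u c n)
    (hv : ∀ n, v (n + 2) = A n * v (n + 1) + B n * v n)
    (h0 : Tendsto (u · 0) l (𝓝 (v 0))) (h1 : Tendsto (u · 1) l (𝓝 (v 1))) (n : ℕ) :
    Tendsto (u · n) l (𝓝 (v n)) := by
  induction n using Nat.twoStepInduction with
  | zero => exact h0
  | one => exact h1
  | more n ih ih_succ =>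
    rw [hv]
    refine (((ha n).mul ih_succ).add ((hb n).mul ih)).congr' ?_
    filter_upwards [hu n] with c hc
    exact hc.symm

theorem Real.rpow_neg_natCast_div_two {c : ℝ} (hc : 0 ≤ c) (n : ℕ) :
    c ^ (-(n : ℝ) / 2) = (√c ^ n)⁻¹ := by
  rw [Real.sqrt_eq_rpow, ← Real.rpow_natCast, ← Real.rpow_mul hc, ← Real.rpow_neg hc]
  ring_nf

theorem chebU_eval_add_two (n : ℕ) (x : ℝ) :
    (chebU (n + 2)).eval x = x * (chebU (n + 1)).eval x + -1 * (chebU n).eval x := by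
  simp only [chebU, eval_sub, eval_mul, eval_X]
  ring

theorem aH_eval_sqrt_div_add_two {c : ℝ} (hc : 0 < c) (n : ℕ) (x : ℝ) :
    (aH c (n + 2)).eval (x * √c) / √c ^ (n + 2) =
      x * ((aH c (n + 1)).eval (x * √c) / √c ^ (n + 1)) +
        -(1 + n / c) * ((aH c n).eval (x * √c) / √c ^ n) := by
  have hs : 0 < √c := Real.sqrt_pos.mpr hc
  have hsq : √c ^ 2 = c := Real.sq_sqrt hc.le
  simp only [aH, eval_sub, eval_mul, eval_X, eval_C]
  generalize (aH c (n + 1)).eval (x * √c) = p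
  generalize (aH c n).eval (x * √c) = q
  generalize √c = s at hs hsq
  subst hsq
  field_simp
  ring

/-- `lim_{c→∞} c^{−n/2} H_n(x√c; c) = U_n(x)` pointwise in `x`. -/
theorem assocHermite_tendsto_chebyshev (n : ℕ) (x : ℝ) :
    Filter.Tendsto (fun c : ℝ => c ^ (-(n : ℝ) / 2) * (aH c n).eval (x * Real.sqrt c))
      Filter.atTop (nhds ((chebU n).eval x)) := by
  have hcoeff (n : ℕ) : Tendsto (fun c : ℝ => -(1 + n / c)) atTop (𝓝 (-1)) := by
    simpa using (((tendsto_const_nhds (x := (n : ℝ))).div_atTop tendsto_id).const_add 1).neg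
  have h1 : ∀ᶠ c : ℝ in atTop, (aH c 1).eval (x * √c) / √c ^ 1 = (chebU 1).eval x := by
    filter_upwards [eventually_gt_atTop 0] with c hc
    simp [aH, chebU, (Real.sqrt_pos.mpr hc).ne']
  have hscaled : Tendsto (fun c : ℝ => (aH c n).eval (x * √c) / √c ^ n) atTop
      (𝓝 ((chebU n).eval x)) :=
    tendsto_of_linear_recurrence (u := fun c n => (aH c n).eval (x * √c) / √c ^ n)
      (v := fun n => (chebU n).eval x) (fun _ => tendsto_const_nhds) hcoeff
      (fun n => (eventually_gt_atTop 0).mono fun c hc => aH_eval_sqrt_div_add_two hc n x)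
      (fun n => chebU_eval_add_two n x) (by simp [aH, chebU])
      (tendsto_const_nhds.congr' (h1.mono fun _ h => h.symm)) n
  refine hscaled.congr' ?_
  filter_upwards [eventually_ge_atTop 0] with c hc
  rw [Real.rpow_neg_natCast_div_two hc, div_eq_inv_mul]
end

section
/- The moments satisfy μ_{2n}(c) = Σ_M Π_{e ∈ M, e nonnested} c, i.e., μ_{2n}(c) equals the sum over all complete matchings M of {1,…,2n} of c raised to the number of edges of M that are not nested by any other edge. -/
open Finset Polynomial

attribute [local instance] Classical.propDecidable

/-- Sum of weights of lattice paths of length `n` from height `h` down to height `0`,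
with steps `(1,1)` (weight 1) and `(1,-1)` (weight `j-1+c` when leaving height `j`),
staying weakly above the x-axis. -/
def pathsum (c : ℝ) : ℕ → ℕ → ℝ
  | 0, 0 => 1
  | 0, _ + 1 => 0
  | n + 1, 0 => pathsum c n 1
  | n + 1, h + 1 => pathsum c n (h + 2) + ((h : ℝ) + c) * pathsum c n h

/-- The `n`-th moment of the associated Hermite polynomials. -/
def mu (c : ℝ) (n : ℕ) : ℝ := pathsum c n 0

/-- `M` is a complete matching of `{1,…,2n}`: each pair `(a,b)` has `a < b`
and every vertex in `{1,…,2n}` lies in exactly one pair. -/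
def IsCompleteMatching (n : ℕ) (M : Finset (ℕ × ℕ)) : Prop :=
  (∀ p ∈ M, p.1 < p.2 ∧ 1 ≤ p.1 ∧ p.2 ≤ 2 * n) ∧
  (∀ v, 1 ≤ v → v ≤ 2 * n → ∃! p : ℕ × ℕ, p ∈ M ∧ (p.1 = v ∨ p.2 = v))

/-- The finite set of all complete matchings of `{1,…,2n}`. -/
noncomputable def matchings (n : ℕ) : Finset (Finset (ℕ × ℕ)) :=
  ((Finset.Icc 1 (2 * n) ×ˢ Finset.Icc 1 (2 * n)).powerset).filter (IsCompleteMatching n)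

/-- Edge `p = {a,b}` (a<b) is nested by edge `q = {a',b'}` (a'<b') if `a' < a < b < b'`. -/
def NestedBy (p q : ℕ × ℕ) : Prop := q.1 < p.1 ∧ p.2 < q.2

/-- The number of edges of `M` nested by no other edge of `M`. -/
noncomputable def nonnestedCount (M : Finset (ℕ × ℕ)) : ℕ :=
  (M.filter (fun p => ∀ q ∈ M, ¬ NestedBy p q)).card

/-!
Scan `1, …, 2n` from left to right. Before vertex `v` is read, what remains to be chosen is a
matching of `L ∪ [v, v + m)` all of whose edges close at or after `v`, where `L` is the set of
openers still waiting for a partner. Vertex `v` either opens an edge (so `L` grows by one) or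
closes the edge of some `a ∈ L`. Every other waiting opener closes after `v`, so this edge is
nested by no other edge exactly when `a = min L`: closing contributes `c + (#L - 1)`, the weight
of a down step from height `#L`. Hence these sums obey the recursion of `pathsum`, with `#L` as
the height.
-/

def IsMatchingOn (S : Finset ℕ) (M : Finset (ℕ × ℕ)) : Prop :=
  (∀ p ∈ M, p.1 < p.2 ∧ p.1 ∈ S ∧ p.2 ∈ S) ∧
  ∀ x ∈ S, ∃! p : ℕ × ℕ, p ∈ M ∧ (p.1 = x ∨ p.2 = x)

noncomputable def matchingsClosingFrom (S : Finset ℕ) (v : ℕ) : Finset (Finset (ℕ × ℕ)) :=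
  (S ×ˢ S).powerset.filter fun M => IsMatchingOn S M ∧ ∀ p ∈ M, v ≤ p.2

section Matchings

variable {S : Finset ℕ} {M : Finset (ℕ × ℕ)} {a b v : ℕ}

theorem IsMatchingOn.eq_of_mem {x : ℕ} (hM : IsMatchingOn S M) (hx : x ∈ S)
    {p q : ℕ × ℕ} (hp : p ∈ M) (hpx : p.1 = x ∨ p.2 = x) (hq : q ∈ M) (hqx : q.1 = x ∨ q.2 = x) :
    p = q :=
  (hM.2 x hx).unique ⟨hp, hpx⟩ ⟨hq, hqx⟩

theorem IsMatchingOn.mem_of_mem {x : ℕ} (hM : IsMatchingOn S M) {p : ℕ × ℕ} (hp : p ∈ M)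
    (hpx : p.1 = x ∨ p.2 = x) : x ∈ S := by
  rcases hpx with rfl | rfl
  exacts [(hM.1 p hp).2.1, (hM.1 p hp).2.2]

theorem mem_matchingsClosingFrom :
    M ∈ matchingsClosingFrom S v ↔ IsMatchingOn S M ∧ ∀ p ∈ M, v ≤ p.2 := by
  refine ⟨fun h => (mem_filter.1 h).2, fun h => mem_filter.2 ⟨mem_powerset.2 fun p hp => ?_, h⟩⟩
  exact mem_product.2 ⟨(h.1.1 p hp).2.1, (h.1.1 p hp).2.2⟩

theorem matchingsClosingFrom_empty : matchingsClosingFrom ∅ v = {∅} := by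
  ext M
  simp only [mem_matchingsClosingFrom, IsMatchingOn, notMem_empty, mem_singleton,
    and_false, imp_false, IsEmpty.forall_iff, implies_true, and_true]
  exact ⟨fun h => eq_empty_of_forall_notMem h.1, fun h => by simp [h]⟩

theorem matchingsClosingFrom_eq_empty (hS : S.Nonempty) (hSv : ∀ x ∈ S, x < v) :
    matchingsClosingFrom S v = ∅ := by
  refine eq_empty_of_forall_notMem fun M hM => ?_
  obtain ⟨⟨hedge, hcover⟩, hclose⟩ := mem_matchingsClosingFrom.1 hM
  obtain ⟨x, hx⟩ := hS
  obtain ⟨p, ⟨hp, -⟩, -⟩ := hcover x hx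
  exact (hclose p hp).not_gt (hSv _ (hedge p hp).2.2)

theorem filter_exists_mem_matchingsClosingFrom (hv : v ∈ S) :
    (matchingsClosingFrom S v).filter (fun M => ∃ b, (v, b) ∈ M) =
      matchingsClosingFrom S (v + 1) := by
  ext M
  simp only [mem_filter, mem_matchingsClosingFrom]
  constructor
  · rintro ⟨⟨hM, hclose⟩, b, hvb⟩
    refine ⟨hM, fun p hp => (hclose p hp).lt_of_ne' fun hpv => ?_⟩
    have := hM.eq_of_mem hv hp (.inr hpv) hvb (.inl rfl)
    have := (hM.1 p hp).1
    simp_all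
  · rintro ⟨hM, hclose⟩
    obtain ⟨p, ⟨hp, hpv⟩, -⟩ := hM.2 v hv
    have hp1 : p.1 = v := hpv.resolve_right (by have := hclose p hp; omega)
    exact ⟨⟨hM, fun q hq => (Nat.le_succ v).trans (hclose q hq)⟩, p.2, hp1 ▸ hp⟩

theorem isMatchingOn_insert_iff (hab : a < b) (ha : a ∈ S) (hb : b ∈ S) :
    IsMatchingOn S (insert (a, b) M) ∧ (a, b) ∉ M ↔ IsMatchingOn ((S.erase a).erase b) M := by
  constructor
  · rintro ⟨hM, hne⟩
    have havoid : ∀ p ∈ M, ∀ x, (p.1 = x ∨ p.2 = x) → x ≠ a ∧ x ≠ b := by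
      intro p hp x hpx
      have hx := hM.mem_of_mem (mem_insert_of_mem hp) hpx
      have hp' := hM.eq_of_mem hx (mem_insert_of_mem hp) hpx (mem_insert_self _ _)
      refine ⟨fun h => hne ?_, fun h => hne ?_⟩ <;>
        simpa [hp' (by simp [h])] using hp
    refine ⟨fun p hp => ?_, fun x hx => ?_⟩
    · obtain ⟨h12, h1, h2⟩ := hM.1 p (mem_insert_of_mem hp)
      simp only [mem_erase]
      exact ⟨h12, ⟨havoid p hp _ (.inl rfl) |>.2, havoid p hp _ (.inl rfl) |>.1, h1⟩,
        ⟨havoid p hp _ (.inr rfl) |>.2, havoid p hp _ (.inr rfl) |>.1, h2⟩⟩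
    · simp only [mem_erase] at hx
      obtain ⟨p, ⟨hp, hpx⟩, huniq⟩ := hM.2 x hx.2.2
      have hpM : p ∈ M := (mem_insert.1 hp).resolve_left (by rintro rfl; omega)
      exact ⟨p, ⟨hpM, hpx⟩, fun q hq => huniq q ⟨mem_insert_of_mem hq.1, hq.2⟩⟩
  · intro hM
    have havoid : ∀ p ∈ M, ∀ x, (p.1 = x ∨ p.2 = x) → x ≠ a ∧ x ≠ b ∧ x ∈ S := by
      intro p hp x hpx
      have := hM.mem_of_mem hp hpx
      simp only [mem_erase] at this
      exact ⟨this.2.1, this.1, this.2.2⟩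
    have hne : (a, b) ∉ M := fun h => (havoid _ h a (.inl rfl)).1 rfl
    refine ⟨⟨fun p hp => ?_, fun x hx => ?_⟩, hne⟩
    · rcases mem_insert.1 hp with rfl | hp
      · exact ⟨hab, ha, hb⟩
      · exact ⟨(hM.1 p hp).1, (havoid p hp _ (.inl rfl)).2.2, (havoid p hp _ (.inr rfl)).2.2⟩
    · by_cases hxab : x = a ∨ x = b
      · refine ⟨(a, b), ⟨mem_insert_self _ _, hxab.imp Eq.symm Eq.symm⟩, fun q ⟨hq, hqx⟩ => ?_⟩
        rcases mem_insert.1 hq with rfl | hq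
        · rfl
        · have := havoid q hq x hqx
          omega
      · obtain ⟨hxa, hxb⟩ := not_or.1 hxab
        obtain ⟨p, ⟨hp, hpx⟩, huniq⟩ := hM.2 x (mem_erase.2 ⟨hxb, mem_erase.2 ⟨hxa, hx⟩⟩)
        refine ⟨p, ⟨mem_insert_of_mem hp, hpx⟩, fun q ⟨hq, hqx⟩ => ?_⟩
        rcases mem_insert.1 hq with rfl | hq
        · omega
        · exact huniq q ⟨hq, hqx⟩

theorem insert_mem_matchingsClosingFrom_iff (hav : a < v) (ha : a ∈ S) (hv : v ∈ S) :
    insert (a, v) M ∈ matchingsClosingFrom S v ∧ (a, v) ∉ M ↔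
      M ∈ matchingsClosingFrom ((S.erase a).erase v) (v + 1) := by
  rw [mem_matchingsClosingFrom, mem_matchingsClosingFrom, ← isMatchingOn_insert_iff hav ha hv,
    forall_mem_insert]
  constructor
  · rintro ⟨⟨hM, -, hclose⟩, hne⟩
    refine ⟨⟨hM, hne⟩, fun p hp => (hclose p hp).lt_of_ne' fun hpv => ?_⟩
    have := (((isMatchingOn_insert_iff hav ha hv).1 ⟨hM, hne⟩).1 p hp).2.2
    simp [hpv] at this
  · rintro ⟨⟨hM, hne⟩, hclose⟩
    exact ⟨⟨hM, le_rfl, fun p hp => (Nat.le_succ v).trans (hclose p hp)⟩, hne⟩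

theorem filter_not_exists_mem_matchingsClosingFrom (hv : v ∈ S) :
    (matchingsClosingFrom S v).filter (fun M => ¬ ∃ b, (v, b) ∈ M) =
      (S.filter (· < v)).biUnion fun a => (matchingsClosingFrom S v).filter ((a, v) ∈ ·) := by
  ext M
  simp only [mem_filter, mem_biUnion]
  constructor
  · rintro ⟨hMv, hopen⟩
    have hM := (mem_matchingsClosingFrom.1 hMv).1
    obtain ⟨p, ⟨hp, hpv | hpv⟩, -⟩ := hM.2 v hv
    · exact absurd ⟨p.2, hpv ▸ hp⟩ hopen
    · obtain ⟨hlt, hS, -⟩ := hM.1 p hp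
      exact ⟨p.1, ⟨hS, hpv ▸ hlt⟩, hMv, hpv ▸ hp⟩
  · rintro ⟨a, ⟨-, hav⟩, hMv, haM⟩
    refine ⟨hMv, fun ⟨b, hvb⟩ => ?_⟩
    have := (mem_matchingsClosingFrom.1 hMv).1.eq_of_mem hv haM (.inr rfl) hvb (.inl rfl)
    simp only [Prod.mk.injEq] at this
    omega

theorem sum_matchingsClosingFrom_eq_add {β : Type*} [AddCommMonoid β]
    (f : Finset (ℕ × ℕ) → β) (hv : v ∈ S) :
    ∑ M ∈ matchingsClosingFrom S v, f M =
      ∑ M ∈ matchingsClosingFrom S (v + 1), f M +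
        ∑ a ∈ S.filter (· < v), ∑ M ∈ (matchingsClosingFrom S v).filter ((a, v) ∈ ·), f M := by
  rw [← sum_filter_add_sum_filter_not _ (fun M => ∃ b, (v, b) ∈ M),
    filter_exists_mem_matchingsClosingFrom hv, filter_not_exists_mem_matchingsClosingFrom hv,
    sum_biUnion]
  intro a _ a' _ haa'
  refine disjoint_filter.2 fun M hMv haM ha'M => haa' ?_
  have := (mem_matchingsClosingFrom.1 hMv).1.eq_of_mem hv haM (.inr rfl) ha'M (.inr rfl)
  exact congrArg Prod.fst this

theorem sum_filter_pair_mem_matchingsClosingFrom {β : Type*} [AddCommMonoid β]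
    (f : Finset (ℕ × ℕ) → β) (hav : a < v) (ha : a ∈ S) (hv : v ∈ S) :
    ∑ M ∈ (matchingsClosingFrom S v).filter ((a, v) ∈ ·), f M =
      ∑ M ∈ matchingsClosingFrom ((S.erase a).erase v) (v + 1), f (insert (a, v) M) := by
  have key := fun M => insert_mem_matchingsClosingFrom_iff (M := M) hav ha hv
  refine sum_nbij' (erase · (a, v)) (insert (a, v)) (fun M hM => ?_) (fun M hM => ?_)
    (fun M hM => ?_) (fun M hM => ?_) (fun M hM => ?_)
  · rw [mem_filter] at hM
    rw [← key, insert_erase hM.2]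
    exact ⟨hM.1, notMem_erase _ _⟩
  · exact mem_filter.2 ⟨((key M).2 hM).1, mem_insert_self _ _⟩
  · exact insert_erase (mem_filter.1 hM).2
  · exact erase_insert ((key M).2 hM).2
  · rw [insert_erase (mem_filter.1 hM).2]

end Matchings

theorem nonnestedCount_insert {M : Finset (ℕ × ℕ)} {e : ℕ × ℕ} (he : e ∉ M)
    (hnest : ∀ p ∈ M, ¬ NestedBy p e) :
    nonnestedCount (insert e M) =
      nonnestedCount M + if ∀ q ∈ M, ¬ NestedBy e q then 1 else 0 := by
  have hself : ¬ NestedBy e e := fun h => lt_irrefl _ h.1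
  have hfilter : M.filter (fun p => ∀ q ∈ insert e M, ¬ NestedBy p q) =
      M.filter (fun p => ∀ q ∈ M, ¬ NestedBy p q) :=
    filter_congr fun p hp => by
      simp only [forall_mem_insert, hnest p hp, not_false_eq_true, true_and]
  rw [nonnestedCount, filter_insert, hfilter, nonnestedCount]
  simp only [forall_mem_insert, hself, not_false_eq_true, true_and]
  split_ifs
  · exact card_insert_of_notMem fun h => he (mem_filter.1 h).1
  · rfl

theorem sum_ite_forall_le {α R : Type*} [LinearOrder α] [AddCommGroupWithOne R] {L : Finset α}
    (hL : L.Nonempty) (c : R) :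
    ∑ a ∈ L, (if ∀ x ∈ L, a ≤ x then c else 1) = ((#L - 1 : ℕ) : R) + c := by
  have hmin := min'_mem L hL
  have hrest : ∀ a ∈ L.erase (L.min' hL), (if ∀ x ∈ L, a ≤ x then c else 1) = 1 := by
    intro a ha
    obtain ⟨hne, haL⟩ := mem_erase.1 ha
    exact if_neg fun h => hne (le_antisymm (h _ hmin) (min'_le L a haL))
  rw [← add_sum_erase L _ hmin, if_pos fun x hx => min'_le L x hx, sum_congr rfl hrest,
    sum_const, card_erase_of_mem hmin, nsmul_one, add_comm]

theorem pow_nonnestedCount_insert {R : Type*} [CommMonoid R] (c : R) {S : Finset ℕ}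
    {M : Finset (ℕ × ℕ)} {a v : ℕ} (hav : a ≤ v) (hM : M ∈ matchingsClosingFrom S (v + 1)) :
    c ^ nonnestedCount (insert (a, v) M) =
      (if ∀ x ∈ S, a ≤ x then c else 1) * c ^ nonnestedCount M := by
  obtain ⟨hMS, hclose⟩ := mem_matchingsClosingFrom.1 hM
  have hne : (a, v) ∉ M := fun h => by simpa using hclose _ h
  have hnest : ∀ p ∈ M, ¬ NestedBy p (a, v) := fun p hp h => by
    have := hclose p hp
    exact absurd h.2 (by dsimp only; omega)
  have hmin : (∀ q ∈ M, ¬ NestedBy (a, v) q) ↔ ∀ x ∈ S, a ≤ x := by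
    refine ⟨fun h x hx => ?_, fun h q hq hnq => (h q.1 (hMS.1 q hq).2.1).not_gt hnq.1⟩
    obtain ⟨q, ⟨hq, rfl | rfl⟩, -⟩ := hMS.2 x hx
    · exact not_lt.1 fun hlt => h q hq ⟨hlt, hclose q hq⟩
    · have := hclose q hq
      omega
  rw [nonnestedCount_insert hne hnest, pow_add, mul_comm]
  simp only [hmin]
  split_ifs <;> simp

section PathRecursion

variable {L : Finset ℕ} {a v m : ℕ}

theorem union_Ico_succ_eq_insert_union :
    L ∪ Ico v (v + (m + 1)) = insert v L ∪ Ico (v + 1) (v + 1 + m) := by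
  ext x
  simp only [mem_union, mem_insert, mem_Ico]
  by_cases hx : x ∈ L
  · simp only [hx, true_or, or_true]
  · simp only [hx, false_or, or_false]
    omega

theorem filter_lt_union_Ico (hL : ∀ x ∈ L, x < v) : (L ∪ Ico v (v + m)).filter (· < v) = L := by
  ext x
  simp only [mem_filter, mem_union, mem_Ico]
  constructor
  · rintro ⟨hx | hx, hxv⟩
    exacts [hx, by omega]
  · exact fun hx => ⟨.inl hx, hL x hx⟩

theorem erase_erase_union_Ico (hL : ∀ x ∈ L, x < v) (ha : a ∈ L) :
    ((L ∪ Ico v (v + (m + 1))).erase a).erase v = L.erase a ∪ Ico (v + 1) (v + 1 + m) := by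
  have hav := hL a ha
  ext x
  simp only [mem_erase, mem_union, mem_Ico]
  constructor
  · rintro ⟨hxv, hxa, hx | hx⟩
    exacts [.inl ⟨hxa, hx⟩, .inr (by omega)]
  · rintro (⟨hxa, hx⟩ | hx)
    exacts [⟨(hL x hx).ne, hxa, .inl hx⟩, ⟨by omega, by omega, .inr (by omega)⟩]

theorem sum_filter_pair_mem_eq_mul (c : ℝ) (hL : ∀ x ∈ L, x < v) (ha : a ∈ L) :
    ∑ M ∈ (matchingsClosingFrom (L ∪ Ico v (v + (m + 1))) v).filter ((a, v) ∈ ·),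
        c ^ nonnestedCount M =
      (if ∀ x ∈ L, a ≤ x then c else 1) *
        ∑ M ∈ matchingsClosingFrom (L.erase a ∪ Ico (v + 1) (v + 1 + m)) (v + 1),
          c ^ nonnestedCount M := by
  have hav := hL a ha
  have hmin : (∀ x ∈ L.erase a ∪ Ico (v + 1) (v + 1 + m), a ≤ x) ↔ ∀ x ∈ L, a ≤ x := by
    simp only [mem_union, mem_erase, mem_Ico]
    refine ⟨fun h x hx => ?_, fun h x hx => ?_⟩
    · rcases eq_or_ne x a with rfl | hxa
      exacts [le_rfl, h x (.inl ⟨hxa, hx⟩)]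
    · rcases hx with ⟨-, hx⟩ | hx
      exacts [h x hx, by omega]
  rw [sum_filter_pair_mem_matchingsClosingFrom _ hav (mem_union_left _ ha)
    (mem_union_right _ (by simp)), erase_erase_union_Ico hL ha, mul_sum]
  refine sum_congr rfl fun M hM => ?_
  rw [pow_nonnestedCount_insert c hav.le hM]
  simp only [hmin]

theorem sum_matchingsClosingFrom_eq_pathsum (c : ℝ) (m : ℕ) (hL : ∀ x ∈ L, x < v) :
    ∑ M ∈ matchingsClosingFrom (L ∪ Ico v (v + m)) v, c ^ nonnestedCount M = pathsum c m #L := by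
  induction m generalizing L v with
  | zero =>
    rw [Nat.add_zero, Ico_self, union_empty]
    rcases L.eq_empty_or_nonempty with rfl | hne
    · simp [matchingsClosingFrom_empty, nonnestedCount, pathsum]
    · obtain ⟨k, hk⟩ := Nat.exists_eq_succ_of_ne_zero hne.card_pos.ne'
      rw [matchingsClosingFrom_eq_empty hne hL, sum_empty, hk, pathsum]
  | succ m ih =>
    have hvL : v ∉ L := fun h => lt_irrefl v (hL v h)
    have hopen : ∑ M ∈ matchingsClosingFrom (L ∪ Ico v (v + (m + 1))) (v + 1),
        c ^ nonnestedCount M = pathsum c m (#L + 1) := by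
      rw [union_Ico_succ_eq_insert_union, ih (fun x hx => ?_), card_insert_of_notMem hvL]
      rcases mem_insert.1 hx with rfl | hx
      exacts [lt_add_one x, (hL x hx).trans (lt_add_one v)]
    have hclose : ∀ a ∈ L,
        ∑ M ∈ (matchingsClosingFrom (L ∪ Ico v (v + (m + 1))) v).filter ((a, v) ∈ ·),
          c ^ nonnestedCount M = (if ∀ x ∈ L, a ≤ x then c else 1) * pathsum c m (#L - 1) := by
      intro a ha
      rw [sum_filter_pair_mem_eq_mul c hL ha,
        ih fun x hx => (hL x (mem_of_mem_erase hx)).trans (lt_add_one v), card_erase_of_mem ha]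
    rw [sum_matchingsClosingFrom_eq_add _ (mem_union_right _ (by simp)), filter_lt_union_Ico hL,
      hopen, sum_congr rfl hclose, ← sum_mul]
    rcases L.eq_empty_or_nonempty with rfl | hne
    · simp [pathsum]
    · obtain ⟨h, hh⟩ := Nat.exists_eq_succ_of_ne_zero hne.card_pos.ne'
      have hweights : (∑ a ∈ L, if ∀ x ∈ L, a ≤ x then c else 1) = ((#L - 1 : ℕ) : ℝ) + c := by
        -- `convert`, as the decidability instances of the two `if`s differ
        convert sum_ite_forall_le hne c
      rw [hweights, hh, pathsum, Nat.succ_sub_one]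

end PathRecursion

theorem isCompleteMatching_iff {n : ℕ} {M : Finset (ℕ × ℕ)} :
    IsCompleteMatching n M ↔ IsMatchingOn (Icc 1 (2 * n)) M ∧ ∀ p ∈ M, 1 ≤ p.2 := by
  simp only [IsCompleteMatching, IsMatchingOn, mem_Icc]
  constructor
  · rintro ⟨hedge, hcover⟩
    refine ⟨⟨fun p hp => ?_, fun x hx => hcover x hx.1 hx.2⟩, fun p hp => ?_⟩ <;>
      have := hedge p hp <;> omega
  · rintro ⟨⟨hedge, hcover⟩, -⟩
    exact ⟨fun p hp => by have := hedge p hp; omega, fun x h1 h2 => hcover x ⟨h1, h2⟩⟩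

theorem matchings_eq_matchingsClosingFrom (n : ℕ) :
    matchings n = matchingsClosingFrom (Icc 1 (2 * n)) 1 := by
  ext M
  simp only [matchings, matchingsClosingFrom, mem_filter, isCompleteMatching_iff]

/-- `μ_{2n}(c)` equals the sum over complete matchings of `{1,…,2n}` of
`c` raised to the number of nonnested edges. -/
theorem moments_eq_nonnested_gf (c : ℝ) (n : ℕ) :
    mu c (2 * n) = ∑ M ∈ matchings n, c ^ nonnestedCount M := by
  have hS : Icc 1 (2 * n) = ∅ ∪ Ico 1 (1 + 2 * n) := by
    rw [empty_union, add_comm, Ico_add_one_right_eq_Icc]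
  rw [matchings_eq_matchingsClosingFrom, hS, sum_matchingsClosingFrom_eq_pathsum c _ (by simp)]
  rfl
end

section
/- The associated Hermite polynomials are orthogonal with respect to the functional L_c with L_c(H_n(x;c)·H_m(x;c)) = 0 for n ≠ m, and L_c(H_n(x;c)²) = c(c+1)⋯(c+n−1) (the rising factorial (c)_n). -/
open Finset Polynomial

attribute [local instance] Classical.propDecidable

/-- Rising factorial `(a)_k = a(a+1)⋯(a+k-1)`. -/
def rising (a : ℝ) (k : ℕ) : ℝ := ∏ i ∈ Finset.range k, (a + i)

/-- The linear functional with moments `μ_n(c)`. -/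
noncomputable def Lc (c : ℝ) (P : Polynomial ℝ) : ℝ :=
  ∑ k ∈ Finset.range (P.natDegree + 1), P.coeff k * mu c k

/-!
Let `Φ_h` send `x^k` to the total weight of the paths of length `k` from height `h` down to `0`,
so that `L_c = Φ_0`. Splitting off the first step gives `Φ_0(x P) = Φ_1(P)` and
`Φ_{h+1}(x P) = Φ_{h+2}(P) + (h + c) Φ_h(P)`. Against the three-term recurrence of `H_n` this
yields `Φ_h(H_n) = δ_{hn} (c)_n`, and pushing `x^k` through the same relations gives
`Φ_0(x^k H_n) = 0` for `k < n` and `Φ_0(x^n H_n) = (c)_n`. Since `H_n` is monic of degree `n`,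
this is orthogonality together with the norms.
-/

lemma rising_succ (a : ℝ) (n : ℕ) : rising a (n + 1) = rising a n * (a + n) :=
  prod_range_succ _ _

section

variable (c : ℝ)

lemma aH_add_two (n : ℕ) : aH c (n + 2) = X * aH c (n + 1) - C ((n : ℝ) + c) * aH c n := rfl

lemma natDegree_aH_le (n : ℕ) : (aH c n).natDegree ≤ n := by
  induction n using aH.induct with
  | case1 => simp [aH]
  | case2 => simp [aH]
  | case3 n ih₁ ih₀ =>
    rw [aH_add_two]
    refine (natDegree_sub_le _ _).trans (max_le ?_ ?_)
    · exact natDegree_mul_le.trans (by rw [natDegree_X]; omega)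
    · exact (natDegree_C_mul_le _ _).trans (by omega)

lemma coeff_aH_self (n : ℕ) : (aH c n).coeff n = 1 := by
  induction n using aH.induct with
  | case1 => simp [aH]
  | case2 => simp [aH]
  | case3 n ih₁ _ =>
    rw [aH_add_two, coeff_sub, coeff_X_mul, ih₁, coeff_C_mul,
      coeff_eq_zero_of_natDegree_lt ((natDegree_aH_le c n).trans_lt (by omega)), mul_zero,
      sub_zero]

noncomputable def pathFunctional (h : ℕ) : ℝ[X] →ₗ[ℝ] ℝ :=
  lsum fun k => LinearMap.mulRight ℝ (pathsum c k h)

lemma pathFunctional_monomial (h k : ℕ) (a : ℝ) :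
    pathFunctional c h (monomial k a) = a * pathsum c k h := by
  simp [pathFunctional]

lemma pathFunctional_apply (h : ℕ) (P : ℝ[X]) :
    pathFunctional c h P = ∑ k ∈ range (P.natDegree + 1), P.coeff k * pathsum c k h := by
  rw [pathFunctional, lsum_apply, sum_over_range _ fun _ => by simp]
  rfl

lemma Lc_eq_pathFunctional_zero (P : ℝ[X]) : Lc c P = pathFunctional c 0 P := by
  rw [pathFunctional_apply, Lc]
  rfl

lemma pathFunctional_C_mul (h : ℕ) (a : ℝ) (P : ℝ[X]) :
    pathFunctional c h (C a * P) = a * pathFunctional c h P := by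
  rw [C_mul', map_smul, smul_eq_mul]

lemma pathFunctional_zero_X_mul (P : ℝ[X]) :
    pathFunctional c 0 (X * P) = pathFunctional c 1 P := by
  induction P using Polynomial.induction_on' with
  | add P Q hP hQ => rw [mul_add, map_add, map_add, hP, hQ]
  | monomial k a =>
    rw [X_mul_monomial, pathFunctional_monomial, pathFunctional_monomial, pathsum]

lemma pathFunctional_succ_X_mul (h : ℕ) (P : ℝ[X]) :
    pathFunctional c (h + 1) (X * P) =
      pathFunctional c (h + 2) P + ((h : ℝ) + c) * pathFunctional c h P := by
  induction P using Polynomial.induction_on' with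
  | add P Q hP hQ => rw [mul_add, map_add, map_add, map_add, hP, hQ]; ring
  | monomial k a =>
    simp only [X_mul_monomial, pathFunctional_monomial, pathsum]
    ring

lemma pathFunctional_aH (n h : ℕ) :
    pathFunctional c h (aH c n) = if n = h then rising c n else 0 := by
  induction n using aH.induct generalizing h with
  | case1 =>
    rw [aH, ← monomial_zero_one, pathFunctional_monomial]
    cases h <;> simp [pathsum, rising]
  | case2 =>
    rw [aH, ← monomial_one_one_eq_X, pathFunctional_monomial]
    rcases h with _ | _ | h <;> simp [pathsum, rising]
  | case3 n ih₁ ih₀ =>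
    rw [aH_add_two, map_sub, pathFunctional_C_mul]
    cases h with
    | zero =>
      rw [pathFunctional_zero_X_mul, ih₁, ih₀]
      rcases n with _ | n <;> simp [rising]
    | succ h =>
      rw [pathFunctional_succ_X_mul, ih₁, ih₁, ih₀]
      split_ifs <;> (try omega) <;> subst_vars <;> push_cast [rising_succ] <;> ring

lemma pathFunctional_X_pow_mul_aH_of_lt {h k n : ℕ} (hkn : h + k < n) :
    pathFunctional c h (X ^ k * aH c n) = 0 := by
  induction k generalizing h with
  | zero => rw [pow_zero, one_mul, pathFunctional_aH, if_neg (by omega)]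
  | succ k ih =>
    rw [pow_succ', mul_assoc]
    cases h with
    | zero => rw [pathFunctional_zero_X_mul, ih (by omega)]
    | succ h => rw [pathFunctional_succ_X_mul, ih (by omega), ih (by omega), mul_zero, add_zero]

lemma pathFunctional_X_pow_mul_aH_of_eq {h k n : ℕ} (hkn : h + k = n) :
    pathFunctional c h (X ^ k * aH c n) = rising c n := by
  induction k generalizing h with
  | zero => rw [pow_zero, one_mul, pathFunctional_aH, if_pos (by omega)]
  | succ k ih =>
    rw [pow_succ', mul_assoc]
    cases h with
    | zero => rw [pathFunctional_zero_X_mul, ih (by omega)]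
    | succ h =>
      rw [pathFunctional_succ_X_mul, ih (by omega),
        pathFunctional_X_pow_mul_aH_of_lt c (by omega), mul_zero, add_zero]

lemma pathFunctional_zero_mul_aH {Q : ℝ[X]} {n : ℕ} (hQ : Q.natDegree ≤ n) :
    pathFunctional c 0 (Q * aH c n) = Q.coeff n * rising c n := by
  conv_lhs => rw [Q.as_sum_range_C_mul_X_pow' (Nat.lt_succ_of_le hQ)]
  simp only [sum_mul, map_sum, mul_assoc, pathFunctional_C_mul]
  rw [sum_range_succ, pathFunctional_X_pow_mul_aH_of_eq c (zero_add n),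
    sum_eq_zero fun k hk => by
      rw [pathFunctional_X_pow_mul_aH_of_lt c (by simpa using hk), mul_zero], zero_add]

end

/-- Orthogonality of associated Hermite polynomials and their `L²` norms. -/
theorem assocHermite_orthogonality (c : ℝ) (n m : ℕ) :
    (n ≠ m → Lc c (aH c n * aH c m) = 0) ∧ Lc c (aH c n * aH c n) = rising c n := by
  have key {a b : ℕ} (hba : b ≤ a) : Lc c (aH c b * aH c a) = (aH c b).coeff a * rising c a := by
    rw [Lc_eq_pathFunctional_zero, pathFunctional_zero_mul_aH c ((natDegree_aH_le c b).trans hba)]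
  have coeff_eq_zero {a b : ℕ} (hba : b < a) : (aH c b).coeff a = 0 :=
    coeff_eq_zero_of_natDegree_lt ((natDegree_aH_le c b).trans_lt hba)
  refine ⟨fun hnm => ?_, by rw [key le_rfl, coeff_aH_self, one_mul]⟩
  rcases hnm.lt_or_gt with hnm | hmn
  · rw [key hnm.le, coeff_eq_zero hnm, zero_mul]
  · rw [mul_comm, key hmn.le, coeff_eq_zero hmn, zero_mul]
end

section
/- For n ≥ m−1, the mixed linearization formula holds: H_n(x;c)·H_m(x) = Σ_{k=0}^{min(m,⌊(n+m)/2⌋)} binom(n−1+c, k)·binom(m,k)·k!·H_{n+m−2k}(x;c), where binom(n−1+c,k) = (n−1+c)(n−2+c)⋯(n−k+c)/k!. -/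
open Finset Polynomial

attribute [local instance] Classical.propDecidable

noncomputable def ordH : ℕ → Polynomial ℝ
  | 0 => 1
  | 1 => Polynomial.X
  | n + 2 => Polynomial.X * ordH (n + 1) - Polynomial.C ((n : ℝ) + 1) * ordH n

/-- Generalized binomial coefficient `binom(a,k) = a(a−1)⋯(a−k+1)/k!`. -/
noncomputable def genBinom (a : ℝ) (k : ℕ) : ℝ :=
  (∏ i ∈ Finset.range k, (a - i)) / (k.factorial : ℝ)

/-!
Let `S_m` be the right-hand side, read with `H_{-1} = 0`. Since
`H_{m+2} = x H_{m+1} - (m+1) H_m`, it suffices to show `S_{m+2} = x S_{m+1} - (m+1) S_m`.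
Expanding `x H_j(x;c) = H_{j+1}(x;c) + (j-1+c) H_{j-1}(x;c)` in `x S_{m+1}` and comparing the
coefficients of `H_{n+m+1-2k}(x;c)`, this comes down to Pascal's rule,
`C(m+1,k) (m+1-k) = (m+1) C(m,k)` and `binom(a,k+1) (k+1)! = binom(a,k) k! (a-k)`.
-/

/-- `shiftedH c j = H_{j-1}(x;c)` with `H_{-1} = 0`, so that `x H_j = H_{j+1} + (j-1+c) H_{j-1}`
holds down to `j = 0`. -/
noncomputable def shiftedH (c : ℝ) : ℕ → ℝ[X]
  | 0 => 0
  | j + 1 => aH c j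

lemma X_mul_shiftedH (c : ℝ) (j : ℕ) :
    X * shiftedH c (j + 1) = shiftedH c (j + 2) + C ((j : ℝ) - 1 + c) * shiftedH c j := by
  cases j with
  | zero => simp [shiftedH, aH]
  | succ i =>
    simp only [shiftedH, aH, Nat.cast_add, Nat.cast_one, add_sub_cancel_right]
    ring

lemma genBinom_succ_mul_factorial (a : ℝ) (k : ℕ) :
    genBinom a (k + 1) * (k + 1).factorial = genBinom a k * k.factorial * (a - k) := by
  have hk : ∀ j : ℕ, genBinom a j * j.factorial = ∏ i ∈ range j, (a - i) := fun j =>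
    div_mul_cancel₀ _ (Nat.cast_ne_zero.2 j.factorial_ne_zero)
  rw [hk, hk, prod_range_succ]

lemma cast_succ_choose_mul_sub (m k : ℕ) :
    ((m + 1).choose k : ℝ) * ((m : ℝ) + 1 - k) = ((m : ℝ) + 1) * m.choose k := by
  rcases le_or_gt k (m + 1) with hk | hk
  · have h := congrArg (Nat.cast : ℕ → ℝ) (Nat.choose_mul_succ_eq m k)
    push_cast [Nat.cast_sub hk] at h
    linarith
  · simp [Nat.choose_eq_zero_of_lt hk, Nat.choose_eq_zero_of_lt (by omega : m < k)]

noncomputable def mixedCoeff (a : ℝ) (m k : ℕ) : ℝ :=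
  genBinom a k * (m.choose k : ℝ) * (k.factorial : ℝ)

lemma mixedCoeff_zero_right (a : ℝ) (m : ℕ) : mixedCoeff a m 0 = 1 := by
  simp [mixedCoeff, genBinom]

lemma mixedCoeff_of_lt {m k : ℕ} (a : ℝ) (h : m < k) : mixedCoeff a m k = 0 := by
  simp [mixedCoeff, Nat.choose_eq_zero_of_lt h]

lemma mixedCoeff_add_two_succ (a : ℝ) (m k : ℕ) :
    mixedCoeff a (m + 2) (k + 1) = mixedCoeff a (m + 1) (k + 1)
      + mixedCoeff a (m + 1) k * (a + m + 1 - 2 * k) - (m + 1) * mixedCoeff a m k := by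
  have hpascal : ((m + 2).choose (k + 1) : ℝ) = (m + 1).choose k + (m + 1).choose (k + 1) := by
    rw [Nat.choose_succ_succ]; push_cast; rfl
  have hf := genBinom_succ_mul_factorial a k
  have hc := cast_succ_choose_mul_sub m k
  simp only [mixedCoeff]
  linear_combination (((m + 2).choose (k + 1) : ℝ) - (m + 1).choose (k + 1)) * hf
    - genBinom a k * k.factorial * hc + genBinom a k * k.factorial * (a - k) * hpascal

noncomputable def mixedSum (c : ℝ) (n m : ℕ) : ℝ[X] :=
  ∑ k ∈ range (m + 1), C (mixedCoeff ((n : ℝ) - 1 + c) m k) * shiftedH c (n + m + 1 - 2 * k)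

lemma mixedSum_zero (c : ℝ) (n : ℕ) : mixedSum c n 0 = aH c n := by
  simp [mixedSum, mixedCoeff_zero_right, shiftedH]

lemma mixedSum_one (c : ℝ) (n : ℕ) : mixedSum c n 1 = X * aH c n := by
  rw [show aH c n = shiftedH c (n + 1) from rfl, X_mul_shiftedH]
  simp [mixedSum, sum_range_succ, mixedCoeff, genBinom]

lemma mixedSum_add_two {n m : ℕ} (c : ℝ) (hmn : m + 1 ≤ n) :
    mixedSum c n (m + 2) = X * mixedSum c n (m + 1) - C ((m : ℝ) + 1) * mixedSum c n m := by
  set a : ℝ := (n : ℝ) - 1 + c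
  -- `T p q k`: the `k`-th coefficient of `S_p` attached to the `k`-th polynomial of `S_q`
  set T : ℕ → ℕ → ℕ → ℝ[X] := fun p q k =>
    C (mixedCoeff a p k) * shiftedH c (n + q + 1 - 2 * k) with hT
  set U : ℕ → ℝ[X] := fun k =>
    C (mixedCoeff a (m + 1) k * (a + m + 1 - 2 * k)) * shiftedH c (n + m + 1 - 2 * k) with hU
  have hX : ∀ k ∈ range (m + 2), X * T (m + 1) (m + 1) k = T (m + 1) (m + 2) k + U k := by
    intro k hk
    have hk : 2 * k ≤ n + m + 1 := by rw [mem_range] at hk; omega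
    obtain ⟨j, hj⟩ : ∃ j, n + m + 1 - 2 * k = j := ⟨_, rfl⟩
    have hcast : (j : ℝ) - 1 + c = a + m + 1 - 2 * k := by
      rw [← hj, Nat.cast_sub hk]; push_cast; ring
    simp only [hT, hU]
    rw [show n + (m + 1) + 1 - 2 * k = j + 1 by omega,
      show n + (m + 2) + 1 - 2 * k = j + 2 by omega, hj, mul_left_comm, X_mul_shiftedH, hcast, C_mul]
    ring
  have hT2 : ∀ k, T (m + 2) (m + 2) (k + 1) =
      T (m + 1) (m + 2) (k + 1) + U k - C ((m : ℝ) + 1) * T m m k := by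
    intro k
    simp only [hT, hU]
    rw [show n + (m + 2) + 1 - 2 * (k + 1) = n + m + 1 - 2 * k by omega, mixedCoeff_add_two_succ]
    simp only [C_add, C_sub, C_mul]
    ring
  calc mixedSum c n (m + 2)
      = ∑ k ∈ range (m + 2), T (m + 2) (m + 2) (k + 1) + T (m + 2) (m + 2) 0 := sum_range_succ' _ _
    _ = (∑ k ∈ range (m + 2), T (m + 1) (m + 2) (k + 1) + T (m + 1) (m + 2) 0)
          + ∑ k ∈ range (m + 2), U k - C ((m : ℝ) + 1) * ∑ k ∈ range (m + 2), T m m k := by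
      simp only [hT2, sum_add_distrib, sum_sub_distrib, mul_sum]
      simp only [hT, mixedCoeff_zero_right]
      ring
    _ = ∑ k ∈ range (m + 2), (T (m + 1) (m + 2) k + U k) - C ((m : ℝ) + 1) * mixedSum c n m := by
      rw [← sum_range_succ', sum_range_succ _ (m + 2), sum_range_succ (T m m) (m + 1),
        sum_add_distrib]
      simp only [hT, mixedCoeff_of_lt a (Nat.lt_succ_self _), C_0, zero_mul, add_zero]
      rfl
    _ = X * mixedSum c n (m + 1) - C ((m : ℝ) + 1) * mixedSum c n m := by
      rw [← sum_congr rfl hX, ← mul_sum]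
      rfl

lemma aH_mul_ordH_eq_mixedSum (c : ℝ) {n m : ℕ} (h : m ≤ n + 1) :
    aH c n * ordH m = mixedSum c n m := by
  induction m using Nat.twoStepInduction with
  | zero => rw [mixedSum_zero, ordH, mul_one]
  | one => rw [mixedSum_one, ordH, mul_comm]
  | more m ih₀ ih₁ =>
    rw [mixedSum_add_two c (by omega), ← ih₀ (by omega), ← ih₁ (by omega), ordH]
    ring

/-- The mixed linearization formula
`H_n(x;c)·H_m(x) = Σ_k binom(n−1+c,k)·binom(m,k)·k!·H_{n+m−2k}(x;c)` for `n ≥ m−1`. -/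
theorem mixed_linearization (n m : ℕ) (h : m ≤ n + 1) (c : ℝ) :
    aH c n * ordH m =
      ∑ k ∈ Finset.range (min m ((n + m) / 2) + 1),
        Polynomial.C (genBinom ((n : ℝ) - 1 + c) k * (m.choose k : ℝ) * (k.factorial : ℝ)) *
          aH c (n + m - 2 * k) := by
  have hsub : range (min m ((n + m) / 2) + 1) ⊆ range (m + 1) :=
    range_subset_range.2 (by omega)
  rw [aH_mul_ordH_eq_mixedSum c h, mixedSum, ← sum_subset hsub]
  · refine sum_congr rfl fun k hk => ?_
    rw [mem_range] at hk
    rw [show n + m + 1 - 2 * k = n + m - 2 * k + 1 by omega]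
    rfl
  -- for `k > (n + m) / 2` the term is `shiftedH c 0 = 0`
  · intro k hkm hk
    rw [mem_range] at hkm hk
    rw [show n + m + 1 - 2 * k = 0 by omega, shiftedH, mul_zero]
end
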